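/- Let V = (Σ, n, δ) be a VAS, let S = s + P* and S' = s' + (P')* be linear sets of configurations with P, P' ⊆ ℕ^n finite. Let V̄ be the VAS over the extended alphabet Σ̄ = Σ_P ∪ Σ ∪ Σ_{P'} where letters in Σ_P have displacements P and letters in Σ_{P'} have displacements −P'. Then Reach_V(S) ∩ S' = s' + f'(L(s, V̄, s')), where f' maps a word to the sum of −δ̄(a) over its letters a ∈ Σ_{P'} (ignoring other letters), and L(s, V̄, s') is the set of words labeling runs of V̄ from s to s'. -/
import Mathlib

open scoped Pointwise

/-- `Run δ s w t` : the word `w` labels a run of the VAS with displacements `δ`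
from configuration `s` to configuration `t` (configurations are the
nonnegative vectors of ℤ^n). -/
def Run {A : Type*} {n : ℕ} (δ : A → (Fin n → ℤ)) :
    (Fin n → ℤ) → List A → (Fin n → ℤ) → Prop
  | s, [], t => s = t ∧ ∀ i, 0 ≤ s i
  | s, a :: w, t => (∀ i, 0 ≤ s i) ∧ Run δ (s + δ a) w t

/-- Configurations reachable from the set `S`. -/
def ReachSet {A : Type*} {n : ℕ} (δ : A → (Fin n → ℤ)) (S : Set (Fin n → ℤ)) :
    Set (Fin n → ℤ) :=
  {t | ∃ s ∈ S, ∃ w : List A, Run δ s w t}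

namespace Stmt18Aux

variable {A : Type*} {n : ℕ}

lemma run_nonneg {δ : A → (Fin n → ℤ)} {s t : Fin n → ℤ} {w : List A}
    (h : Run δ s w t) : ∀ i, 0 ≤ s i := by
  cases w with
  | nil => exact h.2
  | cons a w => exact h.1

lemma run_append {δ : A → (Fin n → ℤ)} {s m t : Fin n → ℤ} {u v : List A}
    (h1 : Run δ s u m) (h2 : Run δ m v t) : Run δ s (u ++ v) t := by
  induction u generalizing s with
  | nil => obtain ⟨rfl, _⟩ := h1; exact h2
  | cons a u ih => exact ⟨h1.1, ih h1.2⟩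

lemma run_shift {δ : A → (Fin n → ℤ)} {s t d : Fin n → ℤ} {w : List A}
    (hd : ∀ i, 0 ≤ d i) (h : Run δ s w t) : Run δ (s + d) w (t + d) := by
  induction w generalizing s with
  | nil => exact ⟨by rw [h.1], fun i => add_nonneg (h.2 i) (hd i)⟩
  | cons a w ih =>
    refine ⟨fun i => add_nonneg (h.1 i) (hd i), ?_⟩
    have := ih h.2
    rwa [add_right_comm]

lemma list_sum_nonneg {l : List (Fin n → ℤ)} (h : ∀ y ∈ l, ∀ i, 0 ≤ y i) :
    ∀ i, 0 ≤ l.sum i := by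
  induction l with
  | nil => simp
  | cons y l ih =>
    intro i
    rw [List.sum_cons]
    exact add_nonneg (h y (by simp) i) (ih (fun z hz => h z (by simp [hz])) i)

lemma mem_closure_nonneg {P : Finset (Fin n → ℤ)} (hP : ∀ p ∈ P, ∀ i, 0 ≤ p i)
    {x : Fin n → ℤ} (hx : x ∈ AddSubmonoid.closure (P : Set (Fin n → ℤ))) :
    ∀ i, 0 ≤ x i := by
  obtain ⟨l, hl, rfl⟩ := AddSubmonoid.exists_list_of_mem_closure hx
  exact list_sum_nonneg (fun y hy i => hP y (hl y hy) i)

end Stmt18Aux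

open Stmt18Aux in
theorem stmt18 {A : Type*} {n : ℕ} (δ : A → (Fin n → ℤ))
    (P P' : Finset (Fin n → ℤ))
    (hP : ∀ p ∈ P, ∀ i, 0 ≤ p i) (hP' : ∀ p ∈ P', ∀ i, 0 ≤ p i)
    (s s' : Fin n → ℤ) (hs : ∀ i, 0 ≤ s i) (hs' : ∀ i, 0 ≤ s' i)
    (S S' : Set (Fin n → ℤ))
    (hS : S = s +ᵥ (AddSubmonoid.closure (P : Set (Fin n → ℤ)) : Set (Fin n → ℤ)))
    (hS' : S' = s' +ᵥ (AddSubmonoid.closure (P' : Set (Fin n → ℤ)) : Set (Fin n → ℤ)))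
    (δbar : (↥P ⊕ A ⊕ ↥P') → (Fin n → ℤ))
    (hδbar : δbar = Sum.elim (fun p => p.1) (Sum.elim δ (fun p => -p.1)))
    (f' : List (↥P ⊕ A ⊕ ↥P') → (Fin n → ℤ))
    (hf' : ∀ w, f' w = (w.map (fun x => match x with
        | Sum.inr (Sum.inr p) => p.1
        | _ => 0)).sum) :
    ReachSet δ S ∩ S' =
      {t | ∃ w : List (↥P ⊕ A ⊕ ↥P'), Run δbar s w s' ∧ t = s' + f' w} := by
  subst hδbar
  set C := AddSubmonoid.closure (P : Set (Fin n → ℤ)) with hC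
  set C' := AddSubmonoid.closure (P' : Set (Fin n → ℤ)) with hC'
  -- f' facts
  have f'_nil : f' [] = 0 := by rw [hf']; simp
  have f'_cons : ∀ (a : ↥P ⊕ A ⊕ ↥P') w, f' (a :: w) =
      (match a with | Sum.inr (Sum.inr p) => (p : Fin n → ℤ) | _ => 0) + f' w := by
    intro a w; rw [hf', hf']; simp
  have f'_append : ∀ u v, f' (u ++ v) = f' u + f' v := by
    intro u v; rw [hf', hf', hf']; simp
  have f'_mem : ∀ w, f' w ∈ C' := by
    intro w
    induction w with
    | nil => rw [f'_nil]; exact zero_mem _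
    | cons a w ih =>
      rw [f'_cons]
      refine add_mem ?_ ih
      rcases a with p | a | p
      · exact zero_mem _
      · exact zero_mem _
      · exact AddSubmonoid.subset_closure p.2
  have hSset : S = {z | ∃ c ∈ C, z = s + c} := by
    rw [hS]; ext z
    simp only [Set.mem_vadd_set, Set.mem_setOf_eq, vadd_eq_add, SetLike.mem_coe]
    constructor
    · rintro ⟨c, hc, rfl⟩; exact ⟨c, hc, rfl⟩
    · rintro ⟨c, hc, rfl⟩; exact ⟨c, hc, rfl⟩
  have hS'set : S' = {z | ∃ c ∈ C', z = s' + c} := by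
    rw [hS']; ext z
    simp only [Set.mem_vadd_set, Set.mem_setOf_eq, vadd_eq_add, SetLike.mem_coe]
    constructor
    · rintro ⟨c, hc, rfl⟩; exact ⟨c, hc, rfl⟩
    · rintro ⟨c, hc, rfl⟩; exact ⟨c, hc, rfl⟩
  have δbar_inl : ∀ p : ↥P,
      Sum.elim (fun p : ↥P => p.1) (Sum.elim δ (fun p : ↥P' => -p.1)) (Sum.inl p) = p.1 :=
    fun _ => rfl
  -- backward main lemma
  have main : ∀ (w : List (↥P ⊕ A ⊕ ↥P')) (x y : Fin n → ℤ),
      Run (Sum.elim (fun p : ↥P => p.1) (Sum.elim δ (fun p : ↥P' => -p.1))) x w y →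
      y + f' w ∈ ReachSet δ {z | ∃ c ∈ C, z = x + c} := by
    intro w
    induction w with
    | nil =>
      rintro x y ⟨rfl, hx⟩
      rw [f'_nil]
      exact ⟨x, ⟨0, zero_mem _, by simp⟩, [], by simpa using ⟨rfl, hx⟩⟩
    | cons a w ih =>
      rintro x y ⟨hx, hrest⟩
      rcases a with p | a | p
      · have IH := ih _ y hrest
        obtain ⟨s₀, ⟨c, hc, rfl⟩, w', hr⟩ := IH
        rw [f'_cons]
        refine ⟨x + ((p : Fin n → ℤ) + c),
          ⟨(p : Fin n → ℤ) + c, add_mem (AddSubmonoid.subset_closure p.2) hc, rfl⟩, w', ?_⟩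
        have : x + ((p : Fin n → ℤ) + c) =
            x + Sum.elim (fun p : ↥P => p.1) (Sum.elim δ (fun p : ↥P' => -p.1)) (Sum.inl p) + c := by
          simp; abel
        rw [this]
        simpa using hr
      · have IH := ih _ y hrest
        obtain ⟨s₀, ⟨c, hc, rfl⟩, w', hr⟩ := IH
        rw [f'_cons]
        have hcnn : ∀ i, 0 ≤ c i := mem_closure_nonneg hP hc
        refine ⟨x + c, ⟨c, hc, rfl⟩, a :: w', ?_⟩
        refine ⟨fun i => add_nonneg (hx i) (hcnn i), ?_⟩
        have : x + c + δ a =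
            x + Sum.elim (fun p : ↥P => p.1) (Sum.elim δ (fun p : ↥P' => -p.1)) (Sum.inr (Sum.inl a)) + c := by
          simp; abel
        rw [this]
        simpa using hr
      · have IH := ih _ y hrest
        obtain ⟨s₀, ⟨c, hc, rfl⟩, w', hr⟩ := IH
        rw [f'_cons]
        have hpnn : ∀ i, 0 ≤ (p : Fin n → ℤ) i := hP' _ p.2
        have hr2 := run_shift hpnn hr
        refine ⟨x + c, ⟨c, hc, rfl⟩, w', ?_⟩
        have h1 : x + Sum.elim (fun p : ↥P => p.1) (Sum.elim δ (fun p : ↥P' => -p.1)) (Sum.inr (Sum.inr p)) + c + (p : Fin n → ℤ) = x + c := by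
          simp; abel
        have h2 : y + f' w + (p : Fin n → ℤ) = y + ((p : Fin n → ℤ) + f' w) := by abel
        rw [h1, h2] at hr2
        exact hr2
  -- forward helpers
  have prefixRun : ∀ (l : List (Fin n → ℤ)), (∀ y ∈ l, y ∈ P) →
      ∀ x : Fin n → ℤ, (∀ i, 0 ≤ x i) →
      ∃ w : List (↥P ⊕ A ⊕ ↥P'),
        Run (Sum.elim (fun p : ↥P => p.1) (Sum.elim δ (fun p : ↥P' => -p.1))) x w (x + l.sum)
        ∧ f' w = 0 := by
    intro l
    induction l with
    | nil => intro _ x hx; exact ⟨[], by simpa using ⟨rfl, hx⟩, f'_nil⟩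
    | cons y l ih =>
      intro hl x hx
      have hy : y ∈ P := hl y (by simp)
      have hxy : ∀ i, 0 ≤ (x + y) i := fun i => add_nonneg (hx i) (hP y hy i)
      obtain ⟨w, hw, hfw⟩ := ih (fun z hz => hl z (by simp [hz])) (x + y) hxy
      refine ⟨Sum.inl ⟨y, hy⟩ :: w, ⟨hx, ?_⟩, by rw [f'_cons, hfw]; simp⟩
      have : x + Sum.elim (fun p : ↥P => p.1) (Sum.elim δ (fun p : ↥P' => -p.1)) (Sum.inl ⟨y, hy⟩) = x + y := rfl
      rw [this, List.sum_cons, ← add_assoc]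
      exact hw
  have embedRun : ∀ (w : List A) (x y : Fin n → ℤ), Run δ x w y →
      Run (Sum.elim (fun p : ↥P => p.1) (Sum.elim δ (fun p : ↥P' => -p.1))) x
        (w.map (fun a => Sum.inr (Sum.inl a))) y
        ∧ f' (w.map (fun a => Sum.inr (Sum.inl a))) = 0 := by
    intro w
    induction w with
    | nil => intro x y h; exact ⟨h, f'_nil⟩
    | cons a w ih =>
      intro x y h
      obtain ⟨hw, hfw⟩ := ih _ y h.2
      refine ⟨⟨h.1, ?_⟩, by rw [List.map_cons, f'_cons, hfw]; simp⟩
      exact hw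
  have suffixRun : ∀ (l : List (Fin n → ℤ)), (∀ y ∈ l, y ∈ P') →
      ∃ w : List (↥P ⊕ A ⊕ ↥P'),
        Run (Sum.elim (fun p : ↥P => p.1) (Sum.elim δ (fun p : ↥P' => -p.1))) (s' + l.sum) w s'
        ∧ f' w = l.sum := by
    intro l
    induction l with
    | nil =>
      intro _
      exact ⟨[], by simpa using ⟨rfl, fun i => by simpa using hs' i⟩, f'_nil⟩
    | cons y l ih =>
      intro hl
      have hy : y ∈ P' := hl y (by simp)
      obtain ⟨w, hw, hfw⟩ := ih (fun z hz => hl z (by simp [hz]))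
      have hlnn : ∀ i, 0 ≤ l.sum i :=
        list_sum_nonneg (fun z hz i => hP' z (hl z (by simp [hz])) i)
      refine ⟨Sum.inr (Sum.inr ⟨y, hy⟩) :: w, ⟨?_, ?_⟩, ?_⟩
      · intro i
        rw [List.sum_cons]
        exact add_nonneg (hs' i) (add_nonneg (hP' y hy i) (hlnn i))
      · have : s' + (y :: l).sum +
            Sum.elim (fun p : ↥P => p.1) (Sum.elim δ (fun p : ↥P' => -p.1)) (Sum.inr (Sum.inr ⟨y, hy⟩)) = s' + l.sum := by
          rw [List.sum_cons]; simp; abel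
        rw [this]
        exact hw
      · rw [f'_cons, hfw, List.sum_cons]
  -- the equality
  ext t
  simp only [Set.mem_inter_iff, Set.mem_setOf_eq]
  constructor
  · rintro ⟨⟨s₀, hs₀, w, hrun⟩, htS'⟩
    rw [hSset] at hs₀
    obtain ⟨c, hc, rfl⟩ := hs₀
    obtain ⟨l, hl, hlsum⟩ := AddSubmonoid.exists_list_of_mem_closure hc
    obtain ⟨wP, hwP, hfP⟩ := prefixRun l hl s hs
    rw [hlsum] at hwP
    have hE := embedRun w (s + c) t hrun
    obtain ⟨hwA, hfA⟩ := hE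
    rw [hS'set] at htS'
    obtain ⟨q, hq, htq⟩ := htS'
    obtain ⟨l', hl', hl'sum⟩ := AddSubmonoid.exists_list_of_mem_closure hq
    obtain ⟨wS, hwS, hfS⟩ := suffixRun l' hl'
    rw [hl'sum] at hwS hfS
    rw [← htq] at hwS
    refine ⟨wP ++ (w.map (fun a => Sum.inr (Sum.inl a)) ++ wS), run_append hwP (run_append hwA hwS), ?_⟩
    rw [f'_append, f'_append, hfP, hfA, hfS, htq]
    abel
  · rintro ⟨w, hrun, rfl⟩
    have hmem := main w s s' hrun
    rw [hSset]
    refine ⟨hmem, ?_⟩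
    rw [hS'set]
    exact ⟨f' w, f'_mem w, rfl⟩
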